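/- Let n ≥ 3, and suppose f : C_n → ℝ is a partial polymatroid on the n-cycle scenario satisfying f({1,n}) = f({1}) + f({n}) (the closing pair is 'independent'), together with the basic inequalities f({i}) ≤ f({i,i+1}), f({i+1}) ≤ f({i,i+1}), and f({i,i+1}) ≤ f({i}) + f({i+1}) for all i mod n. If additionally the chain inequality Σ_{i=1}^{n} f({i}) ≤ Σ_{i=1}^{n−1} f({i,i+1}) holds, then all n cycle inequalities f({i,i+1}) + Σ_{j≠i,i+1} f({j}) ≤ Σ_{j≠i} f({j,j+1}) hold (indices mod n). -/

import Mathlib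

/-!
Write `g i = f {i}` and `e i = f {i, i + 1}`. Since `e i ≤ g i + g (i + 1)`, the `i`-th cycle
inequality follows from `∑ g + e i ≤ ∑ e`. For the closing edge this is the chain inequality.
For any other edge `k`, independence turns the closing edge into `g 0 + g (n - 1)`, and the
remaining `n - 2` edges other than `k` dominate the `n - 2` interior vertices of the path
`0, …, n - 1`: the edges before `k` their right endpoints, those after `k` their left ones.
-/

open Finset Fin.NatCast

theorem sum_range_succ_add_le_sum_range {g e : ℕ → ℝ} (hg : ∀ j, g j ≤ e j)
    (hg_succ : ∀ j, g (j + 1) ≤ e j) {m k : ℕ} (hk : k ≤ m) :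
    ∑ j ∈ range m, g (j + 1) + e k ≤ ∑ j ∈ range (m + 1), e j := by
  induction m with
  | zero => simp [Nat.le_zero.mp hk]
  | succ m ih =>
    rcases hk.lt_or_eq with hk | rfl
    · rw [sum_range_succ, sum_range_succ _ (m + 1)]
      linarith [ih (Nat.lt_succ_iff.mp hk), hg (m + 1)]
    · rw [sum_range_succ _ (m + 1)]
      gcongr with j
      exact hg_succ j

theorem Fin.sum_univ_eq_sum_range_natCast {M : Type*} [AddCommMonoid M] {n : ℕ} [NeZero n]
    (f : Fin n → M) : ∑ i, f i = ∑ j ∈ range n, f (j : Fin n) := by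
  simp [Finset.sum_range]

theorem sum_add_le_sum_of_edge_last_eq {m : ℕ} {g e : Fin (m + 2) → ℝ}
    (hg : ∀ i, g i ≤ e i) (hg_succ : ∀ i, g (i + 1) ≤ e i)
    (h_last : e (Fin.last _) = g 0 + g (Fin.last _)) {k : Fin (m + 2)} (hk : k ≠ Fin.last _) :
    ∑ i, g i + e k ≤ ∑ i, e i := by
  have hpath := sum_range_succ_add_le_sum_range (g := fun j : ℕ => g j) (e := fun j : ℕ => e j)
    (fun _ => hg _) (fun j => by simpa using hg_succ j) (Nat.lt_succ_iff.mp (Fin.val_lt_last hk))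
  rw [Fin.sum_univ_eq_sum_range_natCast g, Fin.sum_univ_eq_sum_range_natCast e,
    sum_range_succ, sum_range_succ', sum_range_succ (fun j : ℕ => e j)]
  simp only [Fin.cast_val_eq_self, Nat.cast_zero, Fin.natCast_eq_last] at hpath ⊢
  linarith

/-- Case 2 reduction: if the closing pair of the n-cycle is independent,
the chain inequality implies all n cycle inequalities. -/
theorem chain_implies_cycle_inequalities {n : ℕ} (hn : 3 ≤ n)
    (f : Finset (Fin n) → ℝ)
    (h2 : ∀ i : Fin n, f {i} ≤ f {i, i + ⟨1, by omega⟩})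
    (h3 : ∀ i : Fin n, f {i + ⟨1, by omega⟩} ≤ f {i, i + ⟨1, by omega⟩})
    (h4 : ∀ i : Fin n, f {i, i + ⟨1, by omega⟩} ≤ f {i} + f {i + ⟨1, by omega⟩})
    -- the closing pair {1, n} is independent
    (hind : f {(⟨0, by omega⟩ : Fin n), ⟨n - 1, by omega⟩}
      = f {(⟨0, by omega⟩ : Fin n)} + f {(⟨n - 1, by omega⟩ : Fin n)})
    -- the chain inequality
    (hchain : ∑ i : Fin n, f {i}
      ≤ ∑ i ∈ Finset.univ \ {(⟨n - 1, by omega⟩ : Fin n)}, f {i, i + ⟨1, by omega⟩}) :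
    -- all n cycle inequalities
    ∀ i : Fin n, f {i, i + ⟨1, by omega⟩} + ∑ j ∈ Finset.univ \ {i, i + ⟨1, by omega⟩}, f {j}
      ≤ ∑ j ∈ Finset.univ \ {i}, f {j, j + ⟨1, by omega⟩} := by
  obtain ⟨m, rfl⟩ : ∃ m, n = m + 2 := ⟨n - 2, by omega⟩
  have h_last : (⟨m + 2 - 1, by omega⟩ : Fin (m + 2)) = Fin.last _ := rfl
  simp only [Fin.mk_one, Fin.mk_zero, h_last] at *
  have key (k : Fin (m + 2)) : ∑ i, f {i} + f {k, k + 1} ≤ ∑ i, f {i, i + 1} := by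
    rcases eq_or_ne k (Fin.last _) with rfl | hk
    · rw [sum_sdiff_eq_sub (subset_univ _), sum_singleton] at hchain
      linarith
    · refine sum_add_le_sum_of_edge_last_eq h2 h3 ?_ hk
      rwa [Fin.last_add_one, pair_comm]
  intro i
  rw [sum_sdiff_eq_sub (subset_univ _), sum_sdiff_eq_sub (subset_univ _),
    sum_pair (left_ne_add.mpr one_ne_zero), sum_singleton]
  linarith [key i, h4 i]
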